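/- arXiv:1802.09858 — 3 statements merged into one kernel-verified Lean document; each statement's English description precedes it below -/
import Mathlib

section
/- Kummer's test: A series of positive real numbers ∑_{n=1}^∞ a_n converges if and only if there exist a sequence {B_n} of positive real numbers and an integer N ≥ 1 such that B_n · (a_n / a_{n+1}) − B_{n+1} ≥ 1 for all n ≥ N. -/
/-!
Necessity: with the tail sums `r n = ∑_{k > n} a k`, the choice `B n = r n / a n` gives
`B n * (a n / a (n+1)) - B (n+1) = (r n - r (n+1)) / a (n+1) = 1`.
Sufficiency: multiplying the condition by `a (n+1)` gives
`a (n+1) ≤ B n a n - B (n+1) a (n+1)`, so the partial sums from `N` on telescope and are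
bounded by `B N a N`.
-/

theorem Summable.tsum_nat_add_eq_add_tsum_nat_add_succ {G : Type*} [AddCommGroup G]
    [TopologicalSpace G] [IsTopologicalAddGroup G] [T2Space G] {f : ℕ → G} (hf : Summable f)
    (n : ℕ) : ∑' k, f (k + n) = f n + ∑' k, f (k + (n + 1)) := by
  rw [((summable_nat_add_iff n).2 hf).tsum_eq_zero_add, zero_add]
  simp only [add_right_comm _ 1 n, add_assoc]

theorem summable_of_le_sub_succ {f c : ℕ → ℝ} {N : ℕ} (hf : ∀ n, 0 ≤ f n)
    (hc : ∀ n, N ≤ n → 0 ≤ c n) (hfc : ∀ n, N ≤ n → f n ≤ c n - c (n + 1)) : Summable f := by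
  refine (summable_nat_add_iff N).1 (summable_of_sum_range_le (c := c N) (fun n => hf _) ?_)
  intro n
  calc ∑ i ∈ Finset.range n, f (i + N)
      ≤ ∑ i ∈ Finset.range n, (c (i + N) - c (i + 1 + N)) :=
        Finset.sum_le_sum fun i _ => by
          simpa only [add_right_comm i 1 N] using hfc (i + N) (Nat.le_add_left N i)
    _ = c N - c (n + N) := by rw [Finset.sum_range_sub' (fun i => c (i + N)), zero_add]
    _ ≤ c N := sub_le_self _ (hc _ (Nat.le_add_left N n))

theorem le_mul_sub_mul_of_one_le_mul_div_sub {x y b b' : ℝ} (hy : 0 < y)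
    (h : 1 ≤ b * (x / y) - b') : y ≤ b * x - b' * y := by
  have := mul_le_mul_of_nonneg_right h hy.le
  rwa [one_mul, sub_mul, mul_assoc, div_mul_cancel₀ x hy.ne'] at this

/-- Kummer's test: a series of positive reals `∑_{n=1}^∞ a n` converges iff there exist a
sequence `B` of positive reals and an integer `N ≥ 1` such that
`B n * (a n / a (n+1)) - B (n+1) ≥ 1` for all `n ≥ N`. -/
theorem kummers_test (a : ℕ → ℝ) (hpos : ∀ n, 1 ≤ n → 0 < a n) :
    Summable (fun n : ℕ => a (n + 1)) ↔
      ∃ B : ℕ → ℝ, (∀ n, 1 ≤ n → 0 < B n) ∧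
        ∃ N : ℕ, 1 ≤ N ∧ ∀ n, N ≤ n → B n * (a n / a (n + 1)) - B (n + 1) ≥ 1 := by
  have hpos_succ (n : ℕ) : 0 < a (n + 1) := hpos _ n.succ_pos
  constructor
  · intro hs
    set r : ℕ → ℝ := fun n => ∑' k, a (k + n + 1)
    have hr_pos (n : ℕ) : 0 < r n :=
      ((summable_nat_add_iff n).2 hs).tsum_pos (fun k => (hpos_succ _).le) 0 (hpos_succ _)
    have hr_succ (n : ℕ) : r n = a (n + 1) + r (n + 1) :=
      hs.tsum_nat_add_eq_add_tsum_nat_add_succ n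
    refine ⟨fun n => r n / a n, fun n hn => div_pos (hr_pos n) (hpos n hn), 1, le_rfl,
      fun n hn => ?_⟩
    have han := (hpos n hn).ne'
    have han' := (hpos_succ n).ne'
    have hratio : r n / a n * (a n / a (n + 1)) - r (n + 1) / a (n + 1) = 1 := by
      rw [hr_succ n]
      field_simp
      ring
    exact hratio.ge
  · rintro ⟨B, hB, N, hN, hkummer⟩
    exact summable_of_le_sub_succ (c := fun n => B n * a n) (N := N) (fun n => (hpos_succ n).le)
      (fun n hn => (mul_pos (hB n (hN.trans hn)) (hpos n (hN.trans hn))).le)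
      (fun n hn => le_mul_sub_mul_of_one_le_mul_div_sub (hpos_succ n) (hkummer n hn))
end

section
/- Necessity direction of Kummer's test: If {a_n} is a sequence of positive real numbers and ∑_{n=1}^∞ a_n converges with sum s, then for any real number B_1 > s / a_1, the sequence {B_n} defined recursively by B_{n+1} = B_n · (a_n / a_{n+1}) − 1 for n ≥ 1 consists of positive numbers and satisfies B_n · (a_n / a_{n+1}) − B_{n+1} ≥ 1 for all n ≥ 1. -/
/-! Multiplying the recursion by `a (n+1)` makes it telescope: `B n * a n` is `B 1 * a 1` minus
the partial sum `a 2 + ⋯ + a n`. Since the partial sums of a positive series are bounded by its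
sum `s < B 1 * a 1`, this stays above `a 1 > 0`. The Kummer expression equals `1` exactly. -/

open Finset

namespace Kummer

variable {b C : ℕ → ℝ}

theorem mul_succ_eq_mul_sub {n : ℕ} (hb : b (n + 1) ≠ 0)
    (hrec : C (n + 1) = C n * (b n / b (n + 1)) - 1) :
    C (n + 1) * b (n + 1) = C n * b n - b (n + 1) := by
  rw [hrec]
  field_simp

theorem mul_eq_sub_sum_range (hb : ∀ n, b n ≠ 0)
    (hrec : ∀ n, C (n + 1) = C n * (b n / b (n + 1)) - 1) (n : ℕ) :
    C n * b n = C 0 * b 0 - ∑ i ∈ range n, b (i + 1) := by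
  induction n with
  | zero => simp
  | succ n ih => rw [mul_succ_eq_mul_sub (hb _) (hrec n), ih, sum_range_succ]; ring

theorem pos_of_sum_range_le {s : ℝ} (hb : ∀ n, 0 < b n) (hbdd : ∀ n, ∑ i ∈ range n, b i ≤ s)
    (hC0 : s < C 0 * b 0) (hrec : ∀ n, C (n + 1) = C n * (b n / b (n + 1)) - 1) (n : ℕ) :
    0 < C n := by
  have htel := mul_eq_sub_sum_range (fun k => (hb k).ne') hrec n
  have hpartial := hbdd (n + 1)
  rw [sum_range_succ'] at hpartial
  have hprod : 0 < C n * b n := by linarith [hb 0]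
  exact pos_of_mul_pos_left hprod (hb n).le

end Kummer

/-- Necessity direction of Kummer's test: if `∑_{n=1}^∞ a n = s` and `B 1 > s / a 1`,
then the sequence defined by the recursion `B (n+1) = B n * (a n / a (n+1)) - 1` is
positive and satisfies Kummer's condition for all `n ≥ 1`. -/
theorem kummers_test_necessity (a : ℕ → ℝ) (hpos : ∀ n, 1 ≤ n → 0 < a n)
    (s : ℝ) (hs : HasSum (fun n : ℕ => a (n + 1)) s)
    (B : ℕ → ℝ) (hB1 : B 1 > s / a 1)
    (hrec : ∀ n, 1 ≤ n → B (n + 1) = B n * (a n / a (n + 1)) - 1) :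
    (∀ n, 1 ≤ n → 0 < B n) ∧
      ∀ n, 1 ≤ n → B n * (a n / a (n + 1)) - B (n + 1) ≥ 1 := by
  have ha : ∀ k, 0 < a (k + 1) := fun k => hpos (k + 1) k.succ_pos
  have hbdd : ∀ n, ∑ i ∈ range n, a (i + 1) ≤ s :=
    fun n => sum_le_hasSum _ (fun i _ => (ha i).le) hs
  have hB : s < B 1 * a 1 := (div_lt_iff₀ (ha 0)).1 hB1
  have hpos' := Kummer.pos_of_sum_range_le (C := fun k => B (k + 1)) ha hbdd hB
    (fun k => hrec (k + 1) k.succ_pos)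
  refine ⟨fun n hn => ?_, fun n hn => by rw [hrec n hn]; linarith⟩
  obtain ⟨k, rfl⟩ := Nat.exists_eq_add_of_le' hn
  exact hpos' k
end

section
/- Equivalence of the inequality and equality forms of Kummer's condition: For a sequence {a_n} of positive real numbers and an integer N ≥ 1, there exists a sequence of positive real numbers {B_n}_{n≥N} satisfying B_n · (a_n / a_{n+1}) − B_{n+1} ≥ 1 for all n ≥ N if and only if there exists a sequence of positive real numbers {C_n}_{n≥N} satisfying the equality C_{n+1} = C_n · (a_n / a_{n+1}) − 1 for all n ≥ N. -/
/-!
Given a positive solution `B` of Kummer's inequality `B n * r n - B (n + 1) ≥ 1`, run the equality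
recursion `C (n + 1) = C n * r n - 1` from `C N = B N`. Since `B n * r n > B (n + 1) > 0` forces
`r n > 0`, induction gives `B n ≤ C n`, so `C` stays positive. Conversely, a positive solution of
the equality satisfies the inequality with equality.
-/

namespace Kummer

/-- Constant `c` up to index `N`; only its values from `N` on matter. -/
def solution (r : ℕ → ℝ) (N : ℕ) (c : ℝ) : ℕ → ℝ
  | 0 => c
  | n + 1 => if n < N then c else solution r N c n * r n - 1

variable {r : ℕ → ℝ} {N : ℕ} {c : ℝ}

theorem solution_self : solution r N c N = c := by
  cases N with
  | zero => rfl
  | succ m => simp [solution]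

theorem solution_succ {n : ℕ} (hn : N ≤ n) :
    solution r N c (n + 1) = solution r N c n * r n - 1 := by
  simp [solution, not_lt.mpr hn]

theorem pos_of_mul_sub_ge_one {x y ρ : ℝ} (hx : 0 < x) (hy : 0 < y) (h : x * ρ - y ≥ 1) :
    0 < ρ :=
  pos_of_mul_pos_right (by linarith) hx.le

theorem le_solution {B : ℕ → ℝ} (hBpos : ∀ n, N ≤ n → 0 < B n)
    (hB : ∀ n, N ≤ n → B n * r n - B (n + 1) ≥ 1) {n : ℕ} (hn : N ≤ n) :
    B n ≤ solution r N (B N) n := by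
  induction n, hn using Nat.le_induction with
  | base => rw [solution_self]
  | succ n hn ih =>
    have hr : 0 < r n := pos_of_mul_sub_ge_one (hBpos n hn) (hBpos (n + 1) (by omega)) (hB n hn)
    have := mul_le_mul_of_nonneg_right ih hr.le
    rw [solution_succ hn]
    linarith [hB n hn]

theorem exists_ineq_iff_exists_eq (r : ℕ → ℝ) (N : ℕ) :
    (∃ B : ℕ → ℝ, (∀ n, N ≤ n → 0 < B n) ∧ ∀ n, N ≤ n → B n * r n - B (n + 1) ≥ 1) ↔
      ∃ C : ℕ → ℝ, (∀ n, N ≤ n → 0 < C n) ∧ ∀ n, N ≤ n → C (n + 1) = C n * r n - 1 := by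
  constructor
  · rintro ⟨B, hBpos, hB⟩
    exact ⟨solution r N (B N),
      fun n hn => (hBpos n hn).trans_le (le_solution hBpos hB hn),
      fun n hn => solution_succ hn⟩
  · rintro ⟨C, hCpos, hC⟩
    exact ⟨C, hCpos, fun n hn => by rw [hC n hn]; linarith⟩

end Kummer

theorem kummer_condition_ineq_iff_eq_general (a : ℕ → ℝ)
    (N : ℕ) :
    (∃ B : ℕ → ℝ, (∀ n, N ≤ n → 0 < B n) ∧
        ∀ n, N ≤ n → B n * (a n / a (n + 1)) - B (n + 1) ≥ 1) ↔
      (∃ C : ℕ → ℝ, (∀ n, N ≤ n → 0 < C n) ∧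
        ∀ n, N ≤ n → C (n + 1) = C n * (a n / a (n + 1)) - 1) :=
  Kummer.exists_ineq_iff_exists_eq (fun n => a n / a (n + 1)) N

/-- Equivalence of the inequality and equality forms of Kummer's condition. -/
theorem kummer_condition_ineq_iff_eq (a : ℕ → ℝ) (hpos : ∀ n, 1 ≤ n → 0 < a n)
    (N : ℕ) (hN : 1 ≤ N) :
    (∃ B : ℕ → ℝ, (∀ n, N ≤ n → 0 < B n) ∧
        ∀ n, N ≤ n → B n * (a n / a (n + 1)) - B (n + 1) ≥ 1) ↔
      (∃ C : ℕ → ℝ, (∀ n, N ≤ n → 0 < C n) ∧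
        ∀ n, N ≤ n → C (n + 1) = C n * (a n / a (n + 1)) - 1) :=
  kummer_condition_ineq_iff_eq_general a N
end
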